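/- arXiv:1804.00794 — 3 statements merged into one kernel-verified Lean document; each statement's English description precedes it below -/
import Mathlib

section
/- Graphical domination. Let G be a simple directed graph on [n] with CTLN parameters in the legal range, and suppose k graphically dominates j with respect to σ ⊆ [n]. Then: (a) if j, k ∈ σ, then σ ∉ FP(G|_σ), and hence σ ∉ FP(G); (b) if j ∈ σ and k ∉ σ, then σ ∉ FP(G|_{σ∪{k}}), and hence σ ∉ FP(G); (c) if j ∉ σ, k ∈ σ, and σ ∈ FP(G|_σ), then σ ∈ FP(G|_{σ∪{j}}). -/
open Matrix Finset

/-- `x` is a fixed point of the TLN `(W, b)` restricted to the subset `τ` of neurons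
(coordinates outside `τ` are held at zero): for `i ∈ τ`,
`x i = [∑_{j ∈ τ} W i j * x j + b i]_+`. -/
def IsRestFixedPoint {n : ℕ} (W : Matrix (Fin n) (Fin n) ℝ) (b : Fin n → ℝ)
    (τ : Finset (Fin n)) (x : Fin n → ℝ) : Prop :=
  (∀ i ∈ τ, x i = max 0 (∑ j ∈ τ, W i j * x j + b i)) ∧ ∀ i ∉ τ, x i = 0

/-- `σ ∈ FP(W_τ, b_τ)` : `σ` is the support of a fixed point of the restriction
of the TLN `(W, b)` to `τ`. -/
def memFP {n : ℕ} (W : Matrix (Fin n) (Fin n) ℝ) (b : Fin n → ℝ)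
    (τ σ : Finset (Fin n)) : Prop :=
  ∃ x : Fin n → ℝ, IsRestFixedPoint W b τ x ∧ ∀ i, 0 < x i ↔ i ∈ σ

/-- `det (I - W_σ)`, the determinant of the principal submatrix on `σ`. -/
noncomputable def detIW {n : ℕ} (W : Matrix (Fin n) (Fin n) ℝ) (σ : Finset (Fin n)) : ℝ :=
  ((1 : Matrix {x // x ∈ σ} {x // x ∈ σ} ℝ) - W.submatrix Subtype.val Subtype.val).det

/-- The Cramer determinant `s_i^σ := det ((I − W_{σ∪{i}})_i ; b_{σ∪{i}})`:
the matrix `I − W` restricted to `σ ∪ {i}`, with the column indexed by `i`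
replaced by `b` restricted to `σ ∪ {i}`. -/
noncomputable def cramerDet {n : ℕ} (W : Matrix (Fin n) (Fin n) ℝ) (b : Fin n → ℝ)
    (σ : Finset (Fin n)) (i : Fin n) : ℝ :=
  (Matrix.updateCol
      ((1 : Matrix {x // x ∈ insert i σ} {x // x ∈ insert i σ} ℝ)
        - W.submatrix Subtype.val Subtype.val)
      ⟨i, Finset.mem_insert_self i σ⟩ (fun p => b p.val)).det

/-- The TLN `(W, b)` is competitive. -/
def Competitive {n : ℕ} (W : Matrix (Fin n) (Fin n) ℝ) (b : Fin n → ℝ) : Prop :=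
  (∀ i j, W i j ≤ 0) ∧ (∀ i, W i i = 0) ∧ (∀ i, 0 ≤ b i)

/-- The TLN `(W, b)` is nondegenerate. -/
def Nondegenerate {n : ℕ} (W : Matrix (Fin n) (Fin n) ℝ) (b : Fin n → ℝ) : Prop :=
  (∃ i, 0 < b i) ∧ (∀ σ : Finset (Fin n), detIW W σ ≠ 0) ∧
  (∀ σ : Finset (Fin n), (∀ i ∈ σ, 0 < b i) → ∀ i ∈ σ, cramerDet W b σ i ≠ 0)

/-- The CTLN connectivity matrix of the simple directed graph `G`
(here `G j i` means there is an edge `j → i` in `G`). -/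
def ctlnW {n : ℕ} (G : Fin n → Fin n → Prop) [DecidableRel G] (ε δ : ℝ) :
    Matrix (Fin n) (Fin n) ℝ :=
  Matrix.of fun i j => if i = j then 0 else if G j i then -1 + ε else -1 - δ

/-- `k` graphically dominates `j` with respect to `σ`, in the directed graph `G`
(where `G a b` means there is an edge `a → b`). -/
def GraphDominates {α : Type*} (G : α → α → Prop) (σ : Finset α) (k j : α) : Prop :=
  (j ∈ σ ∨ k ∈ σ) ∧
  (∀ i ∈ σ, i ≠ j → i ≠ k → G i j → G i k) ∧
  (j ∈ σ → G j k) ∧ (k ∈ σ → ¬ G k j)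

/-- `w_j^σ := ∑_{i ∈ σ} (−I + W)_{j i} · |s_i^σ|`. -/
noncomputable def wval {n : ℕ} (W : Matrix (Fin n) (Fin n) ℝ) (b : Fin n → ℝ)
    (σ : Finset (Fin n)) (j : Fin n) : ℝ :=
  ∑ i ∈ σ, (W j i - if j = i then 1 else 0) * |cramerDet W b σ i|

/-!
Write `u = W x + b` for the input at a fixed point `x` of the TLN restricted to `τ`. Since
`x i = max 0 (u i)` on `τ`, the shifted input `u i - x i = ((W - 1) x + b) i` is `≤ 0` on `τ` and
vanishes on the support `σ`. If `k` dominates `j` (row `j` of `W - 1` lies below row `k` on `σ`,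
strictly somewhere, and `b j ≤ b k`), then `u j - x j < u k - x k` for every `x` with support `σ`.
When `j ∈ σ` and `k ∈ τ` this reads `0 < u k - x k ≤ 0`; when `j ∉ σ` and `k ∈ σ` it gives `u j < 0`,
so `x` remains a fixed point after adding `j` to `τ`. For a CTLN, graphical domination puts row `j`
of `W - 1` below row `k` on `σ`, strictly in column `j` (weight `-1 < -1 + ε`) or in column `k`
(weight `-1 - δ < -1`).
-/

def Dominates {n : ℕ} (W : Matrix (Fin n) (Fin n) ℝ) (b : Fin n → ℝ) (σ : Finset (Fin n))
    (k j : Fin n) : Prop :=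
  b j ≤ b k ∧ (∀ p ∈ σ, (W - 1) j p ≤ (W - 1) k p) ∧ ∃ p ∈ σ, (W - 1) j p < (W - 1) k p

section TLN

variable {n : ℕ} {W : Matrix (Fin n) (Fin n) ℝ} {b : Fin n → ℝ} {τ σ : Finset (Fin n)}
  {x : Fin n → ℝ} {i j k : Fin n}

theorem sub_one_mulVec_apply (W : Matrix (Fin n) (Fin n) ℝ) (x : Fin n → ℝ) (i : Fin n) :
    ((W - 1) *ᵥ x) i = (W *ᵥ x) i - x i := by
  rw [sub_mulVec, one_mulVec, Pi.sub_apply]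

theorem isRestFixedPoint_iff_mulVec :
    IsRestFixedPoint W b τ x ↔
      (∀ i ∈ τ, x i = max 0 ((W *ᵥ x) i + b i)) ∧ ∀ i ∉ τ, x i = 0 := by
  refine ⟨fun h => ⟨fun i hi => ?_, h.2⟩, fun h => ⟨fun i hi => ?_, h.2⟩⟩ <;>
  · have hsum : ∑ p ∈ τ, W i p * x p = (W *ᵥ x) i :=
      Finset.sum_subset (Finset.subset_univ τ) fun p _ hp => by rw [h.2 p hp, mul_zero]
    simp only [hsum, h.1 i hi]

namespace IsRestFixedPoint

theorem nonneg (hfp : IsRestFixedPoint W b τ x) (i : Fin n) : 0 ≤ x i := by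
  by_cases hi : i ∈ τ
  · rw [hfp.1 i hi]; exact le_max_left _ _
  · rw [hfp.2 i hi]

theorem support_subset (hfp : IsRestFixedPoint W b τ x) (hsupp : ∀ i, 0 < x i ↔ i ∈ σ) :
    σ ⊆ τ := fun i hi => by
  by_contra hiτ
  exact ((hsupp i).2 hi).ne' (hfp.2 i hiτ)

theorem shiftedInput_nonpos (hfp : IsRestFixedPoint W b τ x) (hi : i ∈ τ) :
    ((W - 1) *ᵥ x) i + b i ≤ 0 := by
  have hx := (isRestFixedPoint_iff_mulVec.1 hfp).1 i hi
  rw [sub_one_mulVec_apply, hx]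
  linarith [le_max_right 0 ((W *ᵥ x) i + b i)]

theorem shiftedInput_eq_zero (hfp : IsRestFixedPoint W b τ x) (hi : i ∈ τ) (hxi : 0 < x i) :
    ((W - 1) *ᵥ x) i + b i = 0 := by
  have hx := (isRestFixedPoint_iff_mulVec.1 hfp).1 i hi
  have hinput : x i = (W *ᵥ x) i + b i := by
    rcases max_choice 0 ((W *ᵥ x) i + b i) with h | h <;> rw [h] at hx
    · exact absurd hx hxi.ne'
    · exact hx
  rw [sub_one_mulVec_apply]
  linarith

theorem insert (hfp : IsRestFixedPoint W b τ x) (hxj : x j = 0)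
    (hj : (W *ᵥ x) j + b j ≤ 0) : IsRestFixedPoint W b (insert j τ) x := by
  rw [isRestFixedPoint_iff_mulVec] at hfp ⊢
  refine ⟨fun i hi => ?_, fun i hi => hfp.2 i fun hiτ => hi (Finset.mem_insert_of_mem hiτ)⟩
  rcases Finset.mem_insert.1 hi with rfl | hiτ
  · rw [hxj, max_eq_left hj]
  · exact hfp.1 i hiτ

end IsRestFixedPoint

theorem Dominates.shiftedInput_lt (hdom : Dominates W b σ k j) (hx : ∀ i, 0 ≤ x i)
    (hsupp : ∀ i, 0 < x i ↔ i ∈ σ) :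
    ((W - 1) *ᵥ x) j + b j < ((W - 1) *ᵥ x) k + b k := by
  obtain ⟨hb, hle, p₀, hp₀, hlt⟩ := hdom
  have hrow : ((W - 1) *ᵥ x) j < ((W - 1) *ᵥ x) k := by
    simp only [mulVec, dotProduct]
    refine Finset.sum_lt_sum (fun p _ => ?_)
      ⟨p₀, Finset.mem_univ _, mul_lt_mul_of_pos_right hlt ((hsupp p₀).2 hp₀)⟩
    by_cases hp : p ∈ σ
    · exact mul_le_mul_of_nonneg_right (hle p hp) (hx p)
    · have hxp : x p = 0 := le_antisymm (not_lt.1 fun h => hp ((hsupp p).1 h)) (hx p)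
      rw [hxp, mul_zero, mul_zero]
  linarith

theorem Dominates.not_memFP (hdom : Dominates W b σ k j) (hj : j ∈ σ) (hk : k ∈ τ) :
    ¬ memFP W b τ σ := by
  rintro ⟨x, hfp, hsupp⟩
  have hj_eq := hfp.shiftedInput_eq_zero (hfp.support_subset hsupp hj) ((hsupp j).2 hj)
  have hk_le := hfp.shiftedInput_nonpos hk
  have hlt := hdom.shiftedInput_lt hfp.nonneg hsupp
  linarith

theorem Dominates.memFP_insert (hdom : Dominates W b σ k j) (hj : j ∉ σ) (hk : k ∈ σ)
    (hσ : memFP W b σ σ) : memFP W b (insert j σ) σ := by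
  obtain ⟨x, hfp, hsupp⟩ := hσ
  have hxj : x j = 0 := hfp.2 j hj
  have hk_eq := hfp.shiftedInput_eq_zero hk ((hsupp k).2 hk)
  have hlt := hdom.shiftedInput_lt hfp.nonneg hsupp
  rw [sub_one_mulVec_apply, sub_one_mulVec_apply, hxj] at hlt
  rw [sub_one_mulVec_apply] at hk_eq
  exact ⟨x, hfp.insert hxj (by linarith), hsupp⟩

end TLN

theorem GraphDominates.ne {α : Type*} {G : α → α → Prop} (hGirr : ∀ i, ¬ G i i)
    {σ : Finset α} {k j : α}
    (hdom : GraphDominates G σ k j) : j ≠ k := by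
  rintro rfl
  obtain ⟨hj | hj, -, hjk, -⟩ := hdom <;> exact hGirr j (hjk hj)

section CTLN

variable {n : ℕ} {G : Fin n → Fin n → Prop} [DecidableRel G] {ε δ : ℝ}

theorem ctlnW_sub_one_apply (i p : Fin n) :
    (ctlnW G ε δ - 1) i p = if i = p then -1 else if G p i then -1 + ε else -1 - δ := by
  by_cases h : i = p <;> simp [ctlnW, h]

theorem GraphDominates.dominates (hGirr : ∀ i, ¬ G i i) (hδ : 0 < δ) (hε : 0 < ε) (θ : ℝ)
    {σ : Finset (Fin n)} {k j : Fin n} (hdom : GraphDominates G σ k j) :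
    Dominates (ctlnW G ε δ) (fun _ => θ) σ k j := by
  have hjk := hdom.ne hGirr
  obtain ⟨hσ, hedge, hjk_edge, hkj_edge⟩ := hdom
  have hentry_j : j ∈ σ → (ctlnW G ε δ - 1) j j < (ctlnW G ε δ - 1) k j := fun hj => by
    simp only [ctlnW_sub_one_apply, if_true, if_neg (Ne.symm hjk), if_pos (hjk_edge hj)]
    linarith
  have hentry_k : k ∈ σ → (ctlnW G ε δ - 1) j k < (ctlnW G ε δ - 1) k k := fun hk => by
    simp only [ctlnW_sub_one_apply, if_true, if_neg hjk, if_neg (hkj_edge hk)]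
    linarith
  refine ⟨le_rfl, fun p hp => ?_, ?_⟩
  · by_cases hpj : p = j
    · subst hpj; exact (hentry_j hp).le
    by_cases hpk : p = k
    · subst hpk; exact (hentry_k hp).le
    simp only [ctlnW_sub_one_apply, if_neg (Ne.symm hpj), if_neg (Ne.symm hpk)]
    by_cases hGj : G p j
    · simp [hGj, hedge p hp hpj hpk hGj]
    · split_ifs <;> linarith
  · rcases hσ with hj | hk
    · exact ⟨j, hj, hentry_j hj⟩
    · exact ⟨k, hk, hentry_k hk⟩

end CTLN

theorem graphical_domination_general {n : ℕ} (G : Fin n → Fin n → Prop) [DecidableRel G]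
    (hGirr : ∀ i, ¬ G i i) (ε δ θ : ℝ)
    (hδ : 0 < δ) (hε : 0 < ε)
    (W : Matrix (Fin n) (Fin n) ℝ) (hWdef : W = ctlnW G ε δ)
    (b : Fin n → ℝ) (hbdef : b = fun _ => θ)
    (σ : Finset (Fin n)) (j k : Fin n) (hdom : GraphDominates G σ k j) :
    (j ∈ σ → k ∈ σ → ¬ memFP W b σ σ ∧ ¬ memFP W b Finset.univ σ) ∧
    (j ∈ σ → k ∉ σ → ¬ memFP W b (insert k σ) σ ∧ ¬ memFP W b Finset.univ σ) ∧
    (j ∉ σ → k ∈ σ → memFP W b σ σ → memFP W b (insert j σ) σ) := by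
  subst hWdef hbdef
  have hdom' := hdom.dominates hGirr hδ hε θ
  exact ⟨fun hj hk => ⟨hdom'.not_memFP hj hk, hdom'.not_memFP hj (Finset.mem_univ k)⟩,
    fun hj _ => ⟨hdom'.not_memFP hj (Finset.mem_insert_self k σ),
      hdom'.not_memFP hj (Finset.mem_univ k)⟩,
    fun hj hk => hdom'.memFP_insert hj hk⟩

/-- **Graphical domination.** Let `G` be a simple directed graph with CTLN parameters in the
legal range, and suppose `k` graphically dominates `j` with respect to `σ`. Then:
(a) if `j, k ∈ σ` then `σ ∉ FP(G|_σ)` and hence `σ ∉ FP(G)`;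
(b) if `j ∈ σ`, `k ∉ σ` then `σ ∉ FP(G|_{σ∪{k}})` and hence `σ ∉ FP(G)`;
(c) if `j ∉ σ`, `k ∈ σ` and `σ ∈ FP(G|_σ)`, then `σ ∈ FP(G|_{σ∪{j}})`. -/
theorem graphical_domination {n : ℕ} (G : Fin n → Fin n → Prop) [DecidableRel G]
    (hGirr : ∀ i, ¬ G i i) (ε δ θ : ℝ)
    (hθ : 0 < θ) (hδ : 0 < δ) (hε : 0 < ε) (hεδ : ε < δ / (δ + 1))
    (W : Matrix (Fin n) (Fin n) ℝ) (hWdef : W = ctlnW G ε δ)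
    (b : Fin n → ℝ) (hbdef : b = fun _ => θ)
    (σ : Finset (Fin n)) (j k : Fin n) (hdom : GraphDominates G σ k j) :
    (j ∈ σ → k ∈ σ → ¬ memFP W b σ σ ∧ ¬ memFP W b Finset.univ σ) ∧
    (j ∈ σ → k ∉ σ → ¬ memFP W b (insert k σ) σ ∧ ¬ memFP W b Finset.univ σ) ∧
    (j ∉ σ → k ∈ σ → memFP W b σ σ → memFP W b (insert j σ) σ) :=
  graphical_domination_general G hGirr ε δ θ hδ hε W hWdef b hbdef σ j k hdom
end

section
/- General domination. Let (W, θ·1) be a competitive nondegenerate TLN on n neurons with uniform external input θ > 0, and for σ ⊆ [n] and j ∈ [n] define w_j^σ := Σ_{i∈σ} (−I+W)_{ji} · |s_i^σ|. Then for any nonempty σ ⊆ [n]: (1) σ is a permitted motif (σ ∈ FP(W_σ, θ·1)) if and only if σ is domination-free, i.e. w_j^σ = w_k^σ for all j, k ∈ σ; and (2) if σ is a permitted motif, then σ ∈ FP(W, θ·1) if and only if for every k ∉ σ there exists j ∈ σ with w_j^σ > w_k^σ. -/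
open Matrix Finset

/-! For a nondegenerate TLN the only possible fixed point with support `σ` is `x^σ`, the solution of
`(I - W_σ) x = b_σ` extended by zero; it is a fixed point of `(W_τ, b_τ)` iff `x^σ > 0` on `σ` and
every `k ∈ τ \ σ` receives nonpositive input `b_k + ∑_{i ∈ σ} W_{ki} x^σ_i`. Cramer's rule gives
`s_i^σ = det (I - W_σ) x^σ_i` for `i ∈ σ`, and a Schur complement gives
`s_k^σ = det (I - W_σ) (b_k + ∑_{i ∈ σ} W_{ki} x^σ_i)` for `k ∉ σ`. So when `x^σ > 0`,
`w^σ = |det (I - W_σ)| (W - I) x^σ`: on `σ` it is the constant `-|det (I - W_σ)| θ`, and for `k ∉ σ`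
it lies below that constant iff `k` receives negative input, while nondegeneracy (`s_k^σ ≠ 0`) rules
out zero input. Conversely, if `w^σ ≡ c` on `σ`, then `c < 0` by competitiveness and
`(θ / -c) |s^σ|` solves `(I - W_σ) x = θ 1`, so `x^σ > 0`. -/

section

variable {n : ℕ} (W : Matrix (Fin n) (Fin n) ℝ) (b : Fin n → ℝ) (σ : Finset (Fin n))

abbrev oneSubW : Matrix σ σ ℝ := 1 - W.submatrix Subtype.val Subtype.val

/-- The solution of `(I - W_σ) x_σ = b_σ`, extended by zero: the only candidate for a fixed point
with support `σ`. -/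
noncomputable def fpCandidate (i : Fin n) : ℝ :=
  if h : i ∈ σ then ((oneSubW W σ)⁻¹ *ᵥ fun j : σ => b j) ⟨i, h⟩ else 0

variable {W b σ}

lemma fpCandidate_of_notMem {i : Fin n} (hi : i ∉ σ) : fpCandidate W b σ i = 0 := dif_neg hi

lemma oneSubW_mulVec_apply (x : Fin n → ℝ) (j : σ) :
    (oneSubW W σ *ᵥ fun i : σ => x i) j = x j - ∑ i ∈ σ, W j i * x i := by
  simp [mulVec, dotProduct, sub_mul, one_apply, Finset.sum_attach σ (fun i => W j i * x i)]

lemma oneSubW_mulVec_eq_iff (x : Fin n → ℝ) :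
    (oneSubW W σ *ᵥ fun i : σ => x i) = (fun j : σ => b j) ↔
      ∀ j ∈ σ, x j = ∑ i ∈ σ, W j i * x i + b j := by
  simp only [funext_iff, oneSubW_mulVec_apply, Subtype.forall]
  exact forall₂_congr fun j _ => by constructor <;> intro h <;> linarith

lemma eqOn_fpCandidate_iff (h : detIW W σ ≠ 0) (x : Fin n → ℝ) :
    (∀ j ∈ σ, x j = fpCandidate W b σ j) ↔ ∀ j ∈ σ, x j = ∑ i ∈ σ, W j i * x i + b j := by
  have hc : oneSubW W σ *ᵥ (fun i : σ => fpCandidate W b σ i) = fun j : σ => b j := by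
    have : (fun i : σ => fpCandidate W b σ i) = (oneSubW W σ)⁻¹ *ᵥ fun j : σ => b j := by
      ext i; simp [fpCandidate]
    rw [this, mulVec_mulVec, mul_nonsing_inv _ (isUnit_iff_ne_zero.mpr h), one_mulVec]
  rw [← oneSubW_mulVec_eq_iff, ← hc, (mulVec_injective_of_det_ne_zero h).eq_iff]
  simp [funext_iff]

lemma fpCandidate_eq_sum (h : detIW W σ ≠ 0) {j : Fin n} (hj : j ∈ σ) :
    fpCandidate W b σ j = ∑ i ∈ σ, W j i * fpCandidate W b σ i + b j :=
  (eqOn_fpCandidate_iff h _).1 (fun _ _ => rfl) j hj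

lemma cramerDet_eq_cramer {i : Fin n} {τ : Finset (Fin n)} (hτ : insert i σ = τ) :
    cramerDet W b σ i = cramer (oneSubW W τ) (fun j : τ => b j) ⟨i, hτ ▸ mem_insert_self i σ⟩ := by
  subst hτ; rfl

lemma cramerDet_insert_self (k : Fin n) : cramerDet W b (insert k σ) k = cramerDet W b σ k := by
  rw [cramerDet_eq_cramer (insert_idem k σ), cramerDet_eq_cramer rfl]

lemma cramerDet_ne_zero (hnd : Nondegenerate W b) {k : Fin n} (hb : ∀ i ∈ insert k σ, 0 < b i) :
    cramerDet W b σ k ≠ 0 :=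
  cramerDet_insert_self (σ := σ) k ▸ hnd.2.2 _ hb k (mem_insert_self k σ)

lemma cramerDet_of_mem (h : detIW W σ ≠ 0) {i : Fin n} (hi : i ∈ σ) :
    cramerDet W b σ i = detIW W σ * fpCandidate W b σ i := by
  rw [cramerDet_eq_cramer (insert_eq_of_mem hi), ← det_smul_inv_mulVec_eq_cramer _ _
    (isUnit_iff_ne_zero.mpr h), fpCandidate, dif_pos hi]
  rfl

lemma cramerDet_of_notMem (h : detIW W σ ≠ 0) {k : Fin n} (hk : k ∉ σ) :
    cramerDet W b σ k = detIW W σ * (b k + ∑ i ∈ σ, W k i * fpCandidate W b σ i) := by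
  let e : σ ⊕ Unit ≃ (insert k σ : Finset (Fin n)) :=
    ((subtypeInsertEquivOption hk).trans (Equiv.optionEquivSumPUnit _)).symm
  have he_inl (i : σ) : e (Sum.inl i) = ⟨i, mem_insert_of_mem i.2⟩ := rfl
  have he_inr : e (Sum.inr ()) = ⟨k, mem_insert_self k σ⟩ := rfl
  have hne (i : σ) : k ≠ i := fun hki => hk (hki ▸ i.2)
  have hblocks : (updateCol (oneSubW W (insert k σ)) ⟨k, mem_insert_self k σ⟩
      (fun j => b j)).submatrix e e = fromBlocks (oneSubW W σ) (of fun i _ => b i)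
        (of fun _ j => -W k j) (of fun _ _ => b k) := by
    ext (i | _) (j | _) <;> simp [he_inl, he_inr, hne, (hne _).symm, one_apply]
  have : Invertible (oneSubW W σ) := (oneSubW W σ).invertibleOfIsUnitDet (isUnit_iff_ne_zero.mpr h)
  rw [cramerDet, ← det_submatrix_equiv_self e, hblocks, det_fromBlocks₁₁, det_unique (n := Unit),
    detIW]
  congr 1
  rw [← sum_coe_sort σ]
  simp [invOf_eq_nonsing_inv, mul_apply, fpCandidate, mulVec, dotProduct, mul_sum, sum_mul,
    mul_assoc, sub_eq_add_neg]
  exact sum_comm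

lemma memFP_iff (h : detIW W σ ≠ 0) {τ : Finset (Fin n)} (hστ : σ ⊆ τ) :
    memFP W b τ σ ↔ (∀ i ∈ σ, 0 < fpCandidate W b σ i) ∧
      ∀ k ∈ τ, k ∉ σ → b k + ∑ i ∈ σ, W k i * fpCandidate W b σ i ≤ 0 := by
  have sum_τ_eq_sum_σ {x : Fin n → ℝ} (hx : ∀ j ∉ σ, x j = 0) (i : Fin n) :
      ∑ j ∈ τ, W i j * x j = ∑ j ∈ σ, W i j * x j :=
    (sum_subset hστ fun j _ hj => by rw [hx j hj, mul_zero]).symm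
  constructor
  · rintro ⟨x, ⟨hfix, hout⟩, hsupp⟩
    have hx0 : ∀ j ∉ σ, x j = 0 := fun j hj => by
      by_cases hjτ : j ∈ τ
      · exact le_antisymm (not_lt.1 (mt (hsupp j).1 hj)) (hfix j hjτ ▸ le_max_left _ _)
      · exact hout j hjτ
    have hrow : ∀ j ∈ σ, x j = ∑ i ∈ σ, W j i * x i + b j := fun j hj => by
      have hpos := (hsupp j).2 hj
      rw [hfix j (hστ hj), sum_τ_eq_sum_σ hx0] at hpos ⊢
      exact max_eq_right (lt_max_iff.1 hpos |>.resolve_left (lt_irrefl 0)).le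
    have hx := (eqOn_fpCandidate_iff h x).2 hrow
    refine ⟨fun i hi => hx i hi ▸ (hsupp i).2 hi, fun k hkτ hk => ?_⟩
    have hk0 := hfix k hkτ
    rw [hx0 k hk, sum_τ_eq_sum_σ hx0, eq_comm, max_eq_left_iff,
      sum_congr rfl fun i hi => by rw [hx i hi]] at hk0
    linarith
  · rintro ⟨hpos, hout⟩
    have hcand0 : ∀ j ∉ σ, fpCandidate W b σ j = 0 := fun j => fpCandidate_of_notMem
    refine ⟨fpCandidate W b σ, ⟨fun i hiτ => ?_, fun i hiτ => hcand0 i (mt (@hστ i) hiτ)⟩,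
      fun i => ⟨fun hxi => ?_, hpos i⟩⟩
    · rw [sum_τ_eq_sum_σ hcand0]
      by_cases hi : i ∈ σ
      · rw [← fpCandidate_eq_sum h hi]
        exact (max_eq_right (hpos i hi).le).symm
      · rw [hcand0 i hi, eq_comm, max_eq_left_iff, add_comm]
        exact hout i hiτ hi
    · by_contra hi
      exact lt_irrefl 0 (hcand0 i hi ▸ hxi)

lemma wval_eq (j : Fin n) :
    wval W b σ j =
      ∑ i ∈ σ, W j i * |cramerDet W b σ i| - if j ∈ σ then |cramerDet W b σ j| else 0 := by
  simp [wval, sub_mul, sum_sub_distrib, ite_mul]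

lemma wval_eq_of_pos (h : detIW W σ ≠ 0) (hpos : ∀ i ∈ σ, 0 < fpCandidate W b σ i) (j : Fin n) :
    wval W b σ j = |detIW W σ| * (∑ i ∈ σ, W j i * fpCandidate W b σ i - fpCandidate W b σ j) := by
  have habs : ∀ i ∈ σ, |cramerDet W b σ i| = |detIW W σ| * fpCandidate W b σ i := fun i hi => by
    rw [cramerDet_of_mem h hi, abs_mul, abs_of_pos (hpos i hi)]
  rw [wval_eq, sum_congr rfl fun i hi => by rw [habs i hi], mul_sub, mul_sum]
  split_ifs with hj
  · rw [habs j hj]; simp only [mul_left_comm]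
  · rw [fpCandidate_of_notMem hj]; simp only [mul_left_comm, mul_zero]

lemma wval_of_mem_of_pos (h : detIW W σ ≠ 0) (hpos : ∀ i ∈ σ, 0 < fpCandidate W b σ i)
    {j : Fin n} (hj : j ∈ σ) : wval W b σ j = -(|detIW W σ| * b j) := by
  rw [wval_eq_of_pos h hpos, fpCandidate_eq_sum h hj]
  ring

lemma wval_lt_wval_iff (h : detIW W σ ≠ 0) (hpos : ∀ i ∈ σ, 0 < fpCandidate W b σ i)
    {j k : Fin n} (hj : j ∈ σ) (hk : k ∉ σ) :
    wval W b σ k < wval W b σ j ↔ b j + ∑ i ∈ σ, W k i * fpCandidate W b σ i < 0 := by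
  rw [wval_of_mem_of_pos h hpos hj, wval_eq_of_pos h hpos, fpCandidate_of_notMem hk, sub_zero,
    ← sub_neg, sub_neg_eq_add, ← mul_add, add_comm]
  exact ⟨fun hlt => neg_of_mul_neg_right hlt (abs_nonneg _),
    fun hlt => mul_neg_of_pos_of_neg (abs_pos.2 h) hlt⟩

lemma memFP_self_iff (h : detIW W σ ≠ 0) :
    memFP W b σ σ ↔ ∀ i ∈ σ, 0 < fpCandidate W b σ i := by
  rw [memFP_iff h subset_rfl]
  exact and_iff_left fun k hk hk' => (hk' hk).elim

lemma fpCandidate_pos_of_sub_sum_eq {θ c : ℝ} (hθ : 0 < θ) (hc : 0 < c) (h : detIW W σ ≠ 0)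
    {y : Fin n → ℝ} (hy : ∀ i ∈ σ, 0 < y i) (hrow : ∀ j ∈ σ, y j - ∑ i ∈ σ, W j i * y i = c) :
    ∀ i ∈ σ, 0 < fpCandidate W (fun _ => θ) σ i := by
  have hz := (eqOn_fpCandidate_iff h ((θ / c) • y)).2 fun j hj => by
    have hyj := hrow j hj
    simp only [Pi.smul_apply, smul_eq_mul, mul_left_comm _ (θ / c), ← mul_sum]
    field_simp
    linarith
  exact fun i hi => hz i hi ▸ mul_pos (div_pos hθ hc) (hy i hi)

lemma fpCandidate_pos_iff_wval_eq {θ : ℝ} (hθ : 0 < θ) (hW : ∀ i j, W i j ≤ 0)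
    (h : detIW W σ ≠ 0) (hs : ∀ i ∈ σ, cramerDet W (fun _ => θ) σ i ≠ 0) :
    (∀ i ∈ σ, 0 < fpCandidate W (fun _ => θ) σ i) ↔
      ∀ j ∈ σ, ∀ k ∈ σ, wval W (fun _ => θ) σ j = wval W (fun _ => θ) σ k := by
  refine ⟨fun hpos j hj k hk => by
    rw [wval_of_mem_of_pos h hpos hj, wval_of_mem_of_pos h hpos hk], fun hw => ?_⟩
  rcases σ.eq_empty_or_nonempty with rfl | ⟨j₀, hj₀⟩
  · simp
  have hrow : ∀ j ∈ σ, |cramerDet W (fun _ => θ) σ j| -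
      ∑ i ∈ σ, W j i * |cramerDet W (fun _ => θ) σ i| = -wval W (fun _ => θ) σ j₀ := fun j hj => by
    rw [hw j₀ hj₀ j hj, wval_eq, if_pos hj]
    ring
  have hc : 0 < -wval W (fun _ => θ) σ j₀ := by
    have hsum := sum_nonpos fun i (_ : i ∈ σ) =>
      mul_nonpos_of_nonpos_of_nonneg (hW j₀ i) (abs_nonneg (cramerDet W (fun _ => θ) σ i))
    linarith [hrow j₀ hj₀, abs_pos.2 (hs j₀ hj₀)]
  exact fpCandidate_pos_of_sub_sum_eq hθ hc h (fun i hi => abs_pos.2 (hs i hi)) hrow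

lemma memFP_univ_iff {θ : ℝ} (hθ : 0 < θ) (h : detIW W σ ≠ 0)
    (hpos : ∀ i ∈ σ, 0 < fpCandidate W (fun _ => θ) σ i)
    (hs : ∀ k ∉ σ, cramerDet W (fun _ => θ) σ k ≠ 0) :
    memFP W (fun _ => θ) univ σ ↔
      ∀ k ∉ σ, ∃ j ∈ σ, wval W (fun _ => θ) σ k < wval W (fun _ => θ) σ j := by
  rw [memFP_iff h (subset_univ σ), and_iff_right hpos]
  simp only [mem_univ, forall_const]
  refine forall₂_congr fun k hk => ?_
  rcases σ.eq_empty_or_nonempty with rfl | ⟨j₀, hj₀⟩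
  · simp [hθ]
  have hne : θ + ∑ i ∈ σ, W k i * fpCandidate W (fun _ => θ) σ i ≠ 0 := fun h0 =>
    hs k hk (by rw [cramerDet_of_notMem h hk, h0, mul_zero])
  rw [le_iff_lt_or_eq, or_iff_left hne]
  exact ⟨fun hlt => ⟨j₀, hj₀, (wval_lt_wval_iff h hpos hj₀ hk).2 hlt⟩,
    fun ⟨j, hj, hlt⟩ => (wval_lt_wval_iff h hpos hj hk).1 hlt⟩

end

theorem general_domination_general {n : ℕ} (W : Matrix (Fin n) (Fin n) ℝ) (θ : ℝ) (hθ : 0 < θ)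
    (b : Fin n → ℝ) (hbdef : b = fun _ => θ)
    (hW : Competitive W b) (hnd : Nondegenerate W b)
    (σ : Finset (Fin n)) :
    (memFP W b σ σ ↔ ∀ j ∈ σ, ∀ k ∈ σ, wval W b σ j = wval W b σ k) ∧
    (memFP W b σ σ →
      (memFP W b Finset.univ σ ↔ ∀ k ∉ σ, ∃ j ∈ σ, wval W b σ k < wval W b σ j)) := by
  subst hbdef
  have hd : detIW W σ ≠ 0 := hnd.2.1 σ
  have hs (k : Fin n) : cramerDet W (fun _ => θ) σ k ≠ 0 := cramerDet_ne_zero hnd fun _ _ => hθ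
  refine ⟨(memFP_self_iff hd).trans (fpCandidate_pos_iff_wval_eq hθ hW.1 hd fun i _ => hs i),
    fun hσσ => ?_⟩
  exact memFP_univ_iff hθ hd ((memFP_self_iff hd).1 hσσ) fun k _ => hs k

/-- **General domination.** Let `(W, θ·1)` be a competitive nondegenerate TLN with uniform
external input `θ > 0`, and let `w_j^σ := ∑_{i∈σ} (−I+W)_{ji} |s_i^σ|`. Then for any
nonempty `σ`: (1) `σ` is a permitted motif iff `σ` is domination-free
(`w_j^σ = w_k^σ` for all `j, k ∈ σ`); (2) if `σ` is a permitted motif, then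
`σ ∈ FP(W, θ·1)` iff for every `k ∉ σ` there exists `j ∈ σ` with `w_j^σ > w_k^σ`. -/
theorem general_domination {n : ℕ} (W : Matrix (Fin n) (Fin n) ℝ) (θ : ℝ) (hθ : 0 < θ)
    (b : Fin n → ℝ) (hbdef : b = fun _ => θ)
    (hW : Competitive W b) (hnd : Nondegenerate W b)
    (σ : Finset (Fin n)) (hσ : σ.Nonempty) :
    (memFP W b σ σ ↔ ∀ j ∈ σ, ∀ k ∈ σ, wval W b σ j = wval W b σ k) ∧
    (memFP W b σ σ →
      (memFP W b Finset.univ σ ↔ ∀ k ∉ σ, ∃ j ∈ σ, wval W b σ k < wval W b σ j)) :=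
  general_domination_general W θ hθ b hbdef hW hnd σ
end

section
/- Disjoint unions. Let G be a simple directed graph on [n] with CTLN parameters in the legal range, such that G is the disjoint union of components G_1,…,G_N on vertex sets τ_1,…,τ_N (i.e. [n] = τ_1 ∪ … ∪ τ_N with the τ_i pairwise disjoint and there are no edges of G between distinct components). Then for any nonempty σ ⊆ [n], writing σ_i := σ ∩ τ_i: σ ∈ FP(G) if and only if for every i ∈ [N], either σ_i = ∅ or σ_i ∈ FP(G_i). Moreover, for any σ ∈ FP(G), with σ̂ := {i ∈ [N] : σ_i ≠ ∅}, one has sgn det(I − W_σ) = (−1)^{|σ̂|−1} · Π_{i∈σ̂} sgn det(I − W_{σ_i}). -/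
open Matrix Finset

/-!
Across components every weight equals `-(1 + δ)`, so on a component `τ k` a fixed point of the
whole network is a fixed point of that component alone, with input `θ` lowered by `1 + δ` times
the mass outside `τ k`. This lowered input is positive exactly on active components, and supports
of fixed points do not change when a positive input is rescaled; this gives the forward
direction. Conversely, fixed points of the active components are glued together with positive
weights, found by solving one scalar equation.

For the signs, adding `1 + δ` to every weight makes the matrix block diagonal and changes
`I - W_σ` only by a rank-one term. A fixed point `x` supported on `σ` turns the matrix
determinant lemma into `det (I - W_σ) * t = det (I - (W + 1 + δ)_σ) * θ` with
`t = θ - (1 + δ) ∑ x < 0`, and likewise on every active block, with the same `t` and the block's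
positive lowered input in place of `θ`. Comparing signs through the block-diagonal
factorisation gives the factor `(-1) ^ (|σ̂| - 1)`.
-/

namespace Real

lemma sign_eq_coe_sign (r : ℝ) : Real.sign r = (SignType.sign r : ℝ) := by
  rcases lt_trichotomy r 0 with h | rfl | h
  · simp [Real.sign_of_neg h, _root_.sign_neg h]
  · simp [Real.sign_zero]
  · simp [Real.sign_of_pos h, _root_.sign_pos h]

lemma sign_mul (a c : ℝ) : Real.sign (a * c) = Real.sign a * Real.sign c := by
  simp only [sign_eq_coe_sign, _root_.sign_mul, SignType.coe_mul]

lemma sign_prod {α : Type*} (s : Finset α) (f : α → ℝ) :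
    Real.sign (∏ i ∈ s, f i) = ∏ i ∈ s, Real.sign (f i) := by
  simp only [sign_eq_coe_sign]
  exact map_prod ((SignType.castHom : SignType →*₀ ℝ).comp signHom) f s

lemma sign_eq_neg_one_pow_mul_prod {ι : Type*} {m : Finset ι} (hm : m.Nonempty)
    {D θ t : ℝ} {Dk Pk θk : ι → ℝ} (hD : D * t = (∏ k ∈ m, Pk k) * θ)
    (hDk : ∀ k ∈ m, Dk k * t = Pk k * θk k) (ht : t < 0) (hθ : 0 < θ)
    (hθk : ∀ k ∈ m, 0 < θk k) :
    Real.sign D = (-1) ^ (#m - 1) * ∏ k ∈ m, Real.sign (Dk k) := by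
  have hsign : -Real.sign D = ∏ k ∈ m, Real.sign (Pk k) := by
    have h := congrArg Real.sign hD
    rw [Real.sign_mul, Real.sign_mul, Real.sign_of_neg ht, Real.sign_of_pos hθ,
      Real.sign_prod] at h
    linarith
  have hsignk : ∀ k ∈ m, Real.sign (Pk k) = -Real.sign (Dk k) := fun k hk => by
    have h := congrArg Real.sign (hDk k hk)
    rw [Real.sign_mul, Real.sign_mul, Real.sign_of_neg ht, Real.sign_of_pos (hθk k hk)] at h
    linarith
  rw [prod_congr rfl hsignk, prod_neg] at hsign
  obtain ⟨j, hj⟩ : ∃ j, #m = j + 1 := ⟨_, (Nat.succ_pred_eq_of_pos hm.card_pos).symm⟩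
  rw [hj, pow_succ] at hsign
  rw [hj, Nat.add_sub_cancel]
  linarith

end Real

lemma Matrix.det_add_vecMulVec_one_of_mulVec_eq_one {ι R : Type*} [Fintype ι] [DecidableEq ι]
    [CommRing R] (A : Matrix ι ι R) {z : ι → R} (hz : A *ᵥ z = 1) (v : ι → R) :
    (A + vecMulVec 1 v).det = A.det * (1 + v ⬝ᵥ z) := by
  rw [show A + vecMulVec 1 v = A * (1 + vecMulVec z v) by
      rw [Matrix.mul_add, Matrix.mul_one, Matrix.mul_vecMulVec, hz],
    Matrix.det_mul, Matrix.vecMulVec_eq Unit, Matrix.det_one_add_replicateCol_mul_replicateRow]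

/-- `I - W_s` is the rank-one update `I - (W + c)_s + c 𝟙𝟙ᵀ`, and a solution of the support
equations of `s`, rescaled by `a - c ∑ x`, is a preimage of `𝟙` under `I - (W + c)_s`. -/
lemma detIW_mul_eq_detIW_add_const_mul {n : ℕ} {W : Matrix (Fin n) (Fin n) ℝ}
    {s : Finset (Fin n)} {x : Fin n → ℝ} {a c : ℝ}
    (hx : ∀ p ∈ s, x p = ∑ q ∈ s, W p q * x q + a) (ht : a - c * ∑ q ∈ s, x q ≠ 0) :
    detIW W s * (a - c * ∑ q ∈ s, x q) = detIW (W + Matrix.of fun _ _ => c) s * a := by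
  set t := a - c * ∑ q ∈ s, x q
  set A : Matrix s s ℝ := 1 - (W + Matrix.of fun _ _ => c).submatrix Subtype.val Subtype.val
  have hsplit : 1 - W.submatrix Subtype.val Subtype.val = A + Matrix.vecMulVec 1 fun _ => c := by
    ext p q
    simp [A]
    ring
  have hz : A *ᵥ (fun p => x p / t) = 1 := by
    rw [Matrix.sub_mulVec, Matrix.one_mulVec]
    funext p
    have hp := hx p p.2
    simp only [Matrix.mulVec, dotProduct, Matrix.submatrix_apply, Matrix.add_apply,
      Matrix.of_apply, Pi.sub_apply, Pi.one_apply, ← mul_div_assoc]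
    rw [sum_coe_sort s fun q => (W p q + c) * x q / t, ← sum_div, ← sub_div,
      div_eq_one_iff_eq ht]
    simp only [add_mul, sum_add_distrib, ← mul_sum]
    linarith
  rw [detIW, hsplit, Matrix.det_add_vecMulVec_one_of_mulVec_eq_one A hz, detIW]
  simp only [dotProduct, ← mul_div_assoc, ← sum_div, ← mul_sum]
  rw [sum_coe_sort s x]
  field_simp
  ring

/-- The weights are `a k = t / (θ - c T k)`, where `t = θ / (1 + ∑ k, c T k / (θ - c T k))`
is negative because every summand is below `-1`. -/
lemma exists_pos_weights {ι : Type*} {m : Finset ι} (hm : m.Nonempty) {θ c : ℝ} {T : ι → ℝ}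
    (hθ : 0 < θ) (hT : ∀ k ∈ m, θ < c * T k) :
    ∃ a : ι → ℝ, ∃ t < 0, (∀ k ∈ m, 0 < a k ∧ a k * (θ - c * T k) = t) ∧
      θ - c * ∑ k ∈ m, a k * T k = t := by
  set E := 1 + ∑ k ∈ m, c * T k / (θ - c * T k)
  have hd : ∀ k ∈ m, θ - c * T k < 0 := fun k hk => by linarith [hT k hk]
  have hE : E < 0 := by
    have hlt : ∑ k ∈ m, c * T k / (θ - c * T k) < ∑ k ∈ m, (-1 : ℝ) :=
      sum_lt_sum_of_nonempty hm fun k hk => by rw [div_lt_iff_of_neg (hd k hk)]; linarith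
    have hcard : (1 : ℝ) ≤ m.card := by exact_mod_cast hm.card_pos
    rw [sum_const, nsmul_eq_mul, mul_neg_one] at hlt
    linarith
  have ht : θ / E < 0 := div_neg_of_pos_of_neg hθ hE
  refine ⟨fun k => θ / E / (θ - c * T k), θ / E, ht,
    fun k hk => ⟨div_pos_of_neg_of_neg ht (hd k hk), div_mul_cancel₀ _ (hd k hk).ne⟩, ?_⟩
  have hsum : c * ∑ k ∈ m, θ / E / (θ - c * T k) * T k = θ / E * (E - 1) := by
    rw [show E - 1 = ∑ k ∈ m, c * T k / (θ - c * T k) by ring, mul_sum, mul_sum]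
    exact sum_congr rfl fun k _ => by ring
  rw [hsum]
  field_simp [hE.ne]
  ring

section FixedPoints

variable {n : ℕ} {W : Matrix (Fin n) (Fin n) ℝ} {b : Fin n → ℝ} {τ σ : Finset (Fin n)}
  {x : Fin n → ℝ} {θ : ℝ}

lemma IsRestFixedPoint.nonneg_s10 (hx : IsRestFixedPoint W b τ x) (i : Fin n) : 0 ≤ x i := by
  by_cases hi : i ∈ τ
  · rw [hx.1 i hi]; exact le_max_left _ _
  · rw [hx.2 i hi]

lemma IsRestFixedPoint.mem_of_pos (hx : IsRestFixedPoint W b τ x) {u : Fin n} (hu : 0 < x u) :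
    u ∈ τ := by
  by_contra h
  linarith [hx.2 u h]

lemma IsRestFixedPoint.eq_of_pos (hx : IsRestFixedPoint W b τ x) {u : Fin n} (hu : 0 < x u) :
    x u = ∑ j ∈ τ, W u j * x j + b u := by
  have h := hx.1 u (hx.mem_of_pos hu)
  rcases le_total (∑ j ∈ τ, W u j * x j + b u) 0 with hle | hle
  · rw [max_eq_left hle] at h; linarith
  · rwa [max_eq_right hle] at h

lemma IsRestFixedPoint.smul (hx : IsRestFixedPoint W b τ x) {a : ℝ} (ha : 0 ≤ a) :
    IsRestFixedPoint W (a • b) τ (a • x) := by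
  refine ⟨fun i hi => ?_, fun i hi => by simp [hx.2 i hi]⟩
  simp only [Pi.smul_apply, smul_eq_mul, mul_left_comm _ a, ← mul_sum, ← mul_add]
  rw [hx.1 i hi, mul_max_of_nonneg _ _ ha, mul_zero]

lemma memFP.smul (h : memFP W b τ σ) {a : ℝ} (ha : 0 < a) : memFP W (a • b) τ σ := by
  obtain ⟨x, hx, hsupp⟩ := h
  exact ⟨a • x, hx.smul ha.le, fun i => by simp [mul_pos_iff_of_pos_left ha, hsupp]⟩

lemma IsRestFixedPoint.eq_sum_support (hx : IsRestFixedPoint W b τ x)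
    (hsupp : ∀ i, 0 < x i ↔ i ∈ σ) {u : Fin n} (hu : u ∈ σ) :
    x u = ∑ j ∈ σ, W u j * x j + b u := by
  have hu' := (hsupp u).2 hu
  rw [hx.eq_of_pos hu', sum_subset (fun j hj => hx.mem_of_pos ((hsupp j).2 hj))]
  intro j _ hj
  rw [le_antisymm (not_lt.1 (mt (hsupp j).1 hj)) (hx.nonneg_s10 j), mul_zero]

lemma pos_piecewise_zero_iff (hsupp : ∀ i, 0 < x i ↔ i ∈ σ) (s : Finset (Fin n)) (i : Fin n) :
    0 < s.piecewise x 0 i ↔ i ∈ σ ∩ s := by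
  by_cases hi : i ∈ s <;> simp [hi, hsupp]

lemma IsRestFixedPoint.sum_support_eq (hx : IsRestFixedPoint W b τ x)
    (hsupp : ∀ i, 0 < x i ↔ i ∈ σ) : ∑ j ∈ σ, x j = ∑ j ∈ τ, x j :=
  sum_subset (fun j hj => hx.mem_of_pos ((hsupp j).2 hj)) fun j _ hj =>
    le_antisymm (not_lt.1 (mt (hsupp j).1 hj)) (hx.nonneg_s10 j)

lemma isRestFixedPoint_zero (hθ : θ ≤ 0) : IsRestFixedPoint W (fun _ => θ) τ 0 :=
  ⟨fun i _ => by simp [hθ], fun _ _ => rfl⟩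

lemma memFP.of_const_input {θ' : ℝ} (h : memFP W (fun _ => θ') τ σ) (hθ' : 0 < θ') (hθ : 0 < θ) :
    memFP W (fun _ => θ) τ σ := by
  convert h.smul (div_pos hθ hθ') using 1
  funext
  simp [hθ'.ne']

lemma IsRestFixedPoint.input_pos (hW : ∀ i j, W i j ≤ 0)
    (hx : IsRestFixedPoint W (fun _ => θ) τ x) {u : Fin n} (hu : 0 < x u) : 0 < θ := by
  have h := hx.eq_of_pos hu
  have : ∑ j ∈ τ, W u j * x j ≤ 0 :=
    sum_nonpos fun j _ => mul_nonpos_of_nonpos_of_nonneg (hW u j) (hx.nonneg_s10 j)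
  linarith

lemma IsRestFixedPoint.lt_mul_sum {c : ℝ} (hdiag : ∀ i, W i i = 0) (hlow : ∀ i j, -c ≤ W i j)
    (hc : 1 < c) (hx : IsRestFixedPoint W (fun _ => θ) τ x) {u : Fin n} (hu : 0 < x u) :
    θ < c * ∑ j ∈ τ, x j := by
  have hsum : (W u u + c) * x u ≤ ∑ j ∈ τ, (W u j + c) * x j :=
    single_le_sum (f := fun j => (W u j + c) * x j)
      (fun j _ => mul_nonneg (by linarith [hlow u j]) (hx.nonneg_s10 j)) (hx.mem_of_pos hu)
  simp only [add_mul, sum_add_distrib, ← mul_sum, hdiag, zero_add] at hsum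
  rw [mul_comm c] at hsum
  nlinarith [hx.eq_of_pos hu]

end FixedPoints

structure IsDisjointUnion {n : ℕ} {ι : Type*} (W : Matrix (Fin n) (Fin n) ℝ) (c : ℝ)
    (τ : ι → Finset (Fin n)) : Prop where
  cover : ∀ u, ∃ k, u ∈ τ k
  disjoint : Pairwise fun k l => Disjoint (τ k) (τ l)
  cross : ∀ k, ∀ u ∈ τ k, ∀ v ∉ τ k, W u v = -c

namespace IsDisjointUnion

variable {n : ℕ} {ι : Type*} {W : Matrix (Fin n) (Fin n) ℝ} {c θ : ℝ} {τ : ι → Finset (Fin n)}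
  {σ : Finset (Fin n)} {x : Fin n → ℝ}

lemma eq_of_mem (hU : IsDisjointUnion W c τ) {k l : ι} {u : Fin n} (hk : u ∈ τ k)
    (hl : u ∈ τ l) : k = l :=
  by_contra fun h => disjoint_left.1 (hU.disjoint h) hk hl

lemma sum_mul_piecewise_add (hU : IsDisjointUnion W c τ) {k : ι} {u : Fin n} (hu : u ∈ τ k)
    (x : Fin n → ℝ) :
    ∑ j ∈ τ k, W u j * (τ k).piecewise x 0 j + (θ - c * ∑ j ∈ (τ k)ᶜ, x j) =
      ∑ j, W u j * x j + θ := by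
  have hin : ∑ j ∈ τ k, W u j * (τ k).piecewise x 0 j = ∑ j ∈ τ k, W u j * x j :=
    sum_congr rfl fun j hj => by rw [piecewise_eq_of_mem _ _ _ hj]
  have hout : ∑ j ∈ (τ k)ᶜ, W u j * x j = -(c * ∑ j ∈ (τ k)ᶜ, x j) := by
    rw [mul_sum, ← sum_neg_distrib]
    exact sum_congr rfl fun j hj => by rw [hU.cross k u hu j (mem_compl.1 hj)]; ring
  rw [← sum_add_sum_compl (τ k), hin, hout]
  ring

lemma isRestFixedPoint_univ_iff (hU : IsDisjointUnion W c τ) :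
    IsRestFixedPoint W (fun _ => θ) univ x ↔ ∀ k,
      IsRestFixedPoint W (fun _ => θ - c * ∑ j ∈ (τ k)ᶜ, x j) (τ k) ((τ k).piecewise x 0) := by
  constructor
  · refine fun hx k => ⟨fun i hi => ?_, fun i hi => piecewise_eq_of_notMem _ _ _ hi⟩
    rw [hU.sum_mul_piecewise_add hi, piecewise_eq_of_mem _ _ _ hi]
    exact hx.1 i (mem_univ i)
  · refine fun h => ⟨fun i _ => ?_, fun i hi => absurd (mem_univ i) hi⟩
    obtain ⟨k, hk⟩ := hU.cover i
    have := (h k).1 i hk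
    rwa [hU.sum_mul_piecewise_add hk, piecewise_eq_of_mem _ _ _ hk] at this

lemma detIW_eq_prod [Fintype ι] [LinearOrder ι] (hU : IsDisjointUnion W 0 τ)
    (σ : Finset (Fin n)) :
    detIW W σ = ∏ k ∈ univ.filter (fun k => (σ ∩ τ k).Nonempty), detIW W (σ ∩ τ k) := by
  classical
  choose κ hκ using hU.cover
  have hκ_iff : ∀ u k, u ∈ τ k ↔ κ u = k :=
    fun u k => ⟨fun h => hU.eq_of_mem (hκ u) h, fun h => h ▸ hκ u⟩
  set A : Matrix σ σ ℝ := 1 - W.submatrix Subtype.val Subtype.val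
  have hA : A.BlockTriangular fun p => κ p := by
    intro p q hlt
    have hpq : p ≠ q := fun h => hlt.ne (by rw [h])
    simp [A, Matrix.one_apply_ne hpq,
      hU.cross _ _ (hκ p) _ fun h => hlt.ne ((hκ_iff q _).1 h)]
  have himage : univ.image (fun p : σ => κ p) = univ.filter fun k => (σ ∩ τ k).Nonempty := by
    ext k
    simp [Finset.Nonempty, hκ_iff]
  rw [detIW, hA.det, himage]
  refine prod_congr rfl fun k _ => ?_
  let e : {u // u ∈ σ ∩ τ k} ≃ {p : σ // κ p = k} :=
    { toFun := fun u => ⟨⟨u, (mem_inter.1 u.2).1⟩, (hκ_iff _ _).1 (mem_inter.1 u.2).2⟩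
      invFun := fun p => ⟨p.1, mem_inter.2 ⟨p.1.2, (hκ_iff _ _).2 p.2⟩⟩
      left_inv := fun _ => rfl
      right_inv := fun _ => rfl }
  rw [detIW, ← Matrix.det_submatrix_equiv_self e]
  congr 1
  ext u v
  simp only [Matrix.submatrix_apply, Matrix.toSquareBlock_def, A, Matrix.sub_apply,
    Matrix.one_apply, Matrix.of_apply]
  exact congrArg (· - _) (if_congr (Subtype.val_injective.eq_iff.trans e.injective.eq_iff) rfl rfl)

lemma piecewise_sum_smul [DecidableEq ι] (hU : IsDisjointUnion W c τ) {m : Finset ι}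
    {y : ι → Fin n → ℝ} (a : ι → ℝ) (hy : ∀ l ∈ m, ∀ u ∉ τ l, y l u = 0) (k : ι) :
    (τ k).piecewise (∑ l ∈ m, a l • y l) 0 = if k ∈ m then a k • y k else 0 := by
  funext u
  by_cases hu : u ∈ τ k
  · have hzero : ∀ l ∈ m, l ≠ k → a l * y l u = 0 := fun l hl hlk => by
      rw [hy l hl u fun h => hlk (hU.eq_of_mem h hu), mul_zero]
    rw [piecewise_eq_of_mem _ _ _ hu, Finset.sum_apply]
    split_ifs with hk
    · exact sum_eq_single_of_mem k hk hzero
    · exact sum_eq_zero fun l hl => hzero l hl fun h => hk (h ▸ hl)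
  · split_ifs with hk
    · simp [hu, hy k hk u hu]
    · simp [hu]

lemma add_const (hU : IsDisjointUnion W c τ) :
    IsDisjointUnion (W + Matrix.of fun _ _ => c) 0 τ :=
  ⟨hU.cover, hU.disjoint, fun k u hu v hv => by simp [hU.cross k u hu v hv]⟩

lemma memFP_block (hU : IsDisjointUnion W c τ) (hW : ∀ i j, W i j ≤ 0) (hθ : 0 < θ)
    (h : memFP W (fun _ => θ) univ σ) {k : ι} (hk : (σ ∩ τ k).Nonempty) :
    memFP W (fun _ => θ) (τ k) (σ ∩ τ k) := by
  obtain ⟨x, hx, hsupp⟩ := h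
  have hxk := hU.isRestFixedPoint_univ_iff.1 hx k
  have hsuppk := pos_piecewise_zero_iff hsupp (τ k)
  obtain ⟨u, hu⟩ := hk
  exact memFP.of_const_input ⟨_, hxk, hsuppk⟩ (hxk.input_pos hW ((hsuppk u).2 hu)) hθ

lemma filter_inter_nonempty [Fintype ι] (hU : IsDisjointUnion W c τ) (hσ : σ.Nonempty) :
    (univ.filter fun k => (σ ∩ τ k).Nonempty).Nonempty := by
  obtain ⟨u, hu⟩ := hσ
  obtain ⟨k, hk⟩ := hU.cover u
  exact ⟨k, mem_filter.2 ⟨mem_univ k, u, mem_inter.2 ⟨hu, hk⟩⟩⟩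

lemma sign_detIW [Fintype ι] [LinearOrder ι] (hU : IsDisjointUnion W c τ)
    (hW : ∀ i j, W i j ≤ 0) (hdiag : ∀ i, W i i = 0) (hlow : ∀ i j, -c ≤ W i j) (hc : 1 < c)
    (hθ : 0 < θ) (h : memFP W (fun _ => θ) univ σ) (hσ : σ.Nonempty) :
    Real.sign (detIW W σ) =
      (-1) ^ (#(univ.filter fun k => (σ ∩ τ k).Nonempty) - 1) *
        ∏ k ∈ univ.filter (fun k => (σ ∩ τ k).Nonempty), Real.sign (detIW W (σ ∩ τ k)) := by
  obtain ⟨x, hx, hsupp⟩ := h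
  have ht : θ - c * ∑ j, x j < 0 := by
    obtain ⟨u, hu⟩ := hσ
    linarith [hx.lt_mul_sum hdiag hlow hc ((hsupp u).2 hu)]
  refine Real.sign_eq_neg_one_pow_mul_prod (hU.filter_inter_nonempty hσ)
    (Pk := fun k => detIW (W + Matrix.of fun _ _ => c) (σ ∩ τ k))
    (θk := fun k => θ - c * ∑ j ∈ (τ k)ᶜ, x j) ?_ (fun k _ => ?_) ht hθ (fun k hk => ?_)
  · have hmass := hx.sum_support_eq hsupp
    rw [← hU.add_const.detIW_eq_prod, ← hmass]
    exact detIW_mul_eq_detIW_add_const_mul (fun p hp => hx.eq_sum_support hsupp hp)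
      (hmass ▸ ht.ne)
  · have hxk := hU.isRestFixedPoint_univ_iff.1 hx k
    have hsuppk := pos_piecewise_zero_iff hsupp (τ k)
    have htk : θ - c * ∑ j ∈ (τ k)ᶜ, x j - c * ∑ j ∈ σ ∩ τ k, (τ k).piecewise x 0 j =
        θ - c * ∑ j, x j := by
      rw [hxk.sum_support_eq hsuppk, sum_congr rfl fun j hj => piecewise_eq_of_mem (τ k) x 0 hj,
        ← sum_compl_add_sum (τ k)]
      ring
    have := detIW_mul_eq_detIW_add_const_mul (fun p hp => hxk.eq_sum_support hsuppk hp)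
      (htk ▸ ht.ne)
    rwa [htk] at this
  · obtain ⟨u, hu⟩ := (mem_filter.1 hk).2
    have hxk := hU.isRestFixedPoint_univ_iff.1 hx k
    exact hxk.input_pos hW ((pos_piecewise_zero_iff hsupp (τ k) u).2 hu)

/-- The weights from `exists_pos_weights` lower the input of every active block to
`a k * θ`, and that of every inactive block below zero. -/
lemma memFP_univ [Fintype ι] (hU : IsDisjointUnion W c τ) (hdiag : ∀ i, W i i = 0)
    (hlow : ∀ i j, -c ≤ W i j) (hc : 1 < c) (hθ : 0 < θ) (hσ : σ.Nonempty)
    (h : ∀ k, σ ∩ τ k = ∅ ∨ memFP W (fun _ => θ) (τ k) (σ ∩ τ k)) :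
    memFP W (fun _ => θ) univ σ := by
  classical
  set m := univ.filter fun k => (σ ∩ τ k).Nonempty with hm
  have hy : ∀ k ∈ m, ∃ y, IsRestFixedPoint W (fun _ => θ) (τ k) y ∧
      ∀ i, 0 < y i ↔ i ∈ σ ∩ τ k :=
    fun k hk => (h k).resolve_left (mem_filter.1 hk).2.ne_empty
  choose! y hy_fp hy_supp using hy
  obtain ⟨a, t, ht, ha, hat⟩ := exists_pos_weights (T := fun k => ∑ j ∈ τ k, y k j)
    (hU.filter_inter_nonempty hσ) hθ fun k hk => by
      obtain ⟨u, hu⟩ := (mem_filter.1 hk).2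
      exact (hy_fp k hk).lt_mul_sum hdiag hlow hc ((hy_supp k hk u).2 hu)
  rw [← hm] at ha hat
  have hx_block := hU.piecewise_sum_smul a fun l hl => (hy_fp l hl).2
  set x : Fin n → ℝ := ∑ l ∈ m, a l • y l with hx
  have hmass : ∑ j, x j = ∑ l ∈ m, a l * ∑ j ∈ τ l, y l j := by
    simp only [hx, Finset.sum_apply, Pi.smul_apply, smul_eq_mul]
    rw [sum_comm]
    refine sum_congr rfl fun l hl => ?_
    rw [← mul_sum, sum_subset (subset_univ _) fun j _ hj => (hy_fp l hl).2 j hj]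
  refine ⟨x, hU.isRestFixedPoint_univ_iff.2 fun k => ?_, fun u => ?_⟩
  · have hout : ∑ j ∈ (τ k)ᶜ, x j = ∑ j, x j - ∑ j ∈ τ k, (τ k).piecewise x 0 j := by
      rw [sum_congr rfl fun j hj => piecewise_eq_of_mem (τ k) x 0 hj, ← sum_compl_add_sum (τ k)]
      ring
    rw [hout, hx_block k, hmass]
    split_ifs with hk
    · convert (hy_fp k hk).smul (ha k hk).1.le using 1
      funext
      simp only [Pi.smul_apply, smul_eq_mul, ← mul_sum]
      linarith [(ha k hk).2]
    · simpa [hat] using isRestFixedPoint_zero (W := W) (τ := τ k) ht.le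
  · obtain ⟨k, hk⟩ := hU.cover u
    have hxu := congrFun (hx_block k) u
    rw [piecewise_eq_of_mem _ _ _ hk] at hxu
    rw [hxu]
    split_ifs with hkm
    · simp [mul_pos_iff_of_pos_left (ha k hkm).1, hy_supp k hkm, hk]
    · exact iff_of_false (lt_irrefl 0) fun hu =>
        hkm (mem_filter.2 ⟨mem_univ k, u, mem_inter.2 ⟨hu, hk⟩⟩)

end IsDisjointUnion

section CTLN

variable {n : ℕ} {G : Fin n → Fin n → Prop} [DecidableRel G] {ε δ : ℝ}

lemma ctlnW_nonpos (hε : ε < 1) (hδ : 0 ≤ δ) (i j : Fin n) : ctlnW G ε δ i j ≤ 0 := by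
  simp only [ctlnW, Matrix.of_apply]
  split_ifs <;> linarith

lemma ctlnW_self (i : Fin n) : ctlnW G ε δ i i = 0 := by
  simp [ctlnW]

lemma neg_one_sub_le_ctlnW (hε : 0 ≤ ε) (hδ : 0 ≤ δ) (i j : Fin n) :
    -(1 + δ) ≤ ctlnW G ε δ i j := by
  simp only [ctlnW, Matrix.of_apply]
  split_ifs <;> linarith

lemma isDisjointUnion_ctlnW {ι : Type*} {τ : ι → Finset (Fin n)} (hcover : ∀ u, ∃ k, u ∈ τ k)
    (hdisj : Pairwise fun k l => Disjoint (τ k) (τ l))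
    (hG : ∀ k l, k ≠ l → ∀ u ∈ τ k, ∀ v ∈ τ l, ¬ G u v) :
    IsDisjointUnion (ctlnW G ε δ) (1 + δ) τ := by
  refine ⟨hcover, hdisj, fun k u hu v hv => ?_⟩
  obtain ⟨l, hl⟩ := hcover v
  have hkl : l ≠ k := fun h => hv (h ▸ hl)
  have huv : u ≠ v := fun h => hv (h ▸ hu)
  simp [ctlnW, huv, hG l k hkl v hl u hu]
  ring

end CTLN

theorem disjoint_union_rule_general {n N : ℕ} (G : Fin n → Fin n → Prop) [DecidableRel G]
    (ε δ θ : ℝ)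
    (hθ : 0 < θ) (hδ : 0 < δ) (hε : 0 < ε) (hεδ : ε < δ / (δ + 1))
    (W : Matrix (Fin n) (Fin n) ℝ) (hWdef : W = ctlnW G ε δ)
    (b : Fin n → ℝ) (hbdef : b = fun _ => θ)
    (τ : Fin N → Finset (Fin n))
    (hdisj : ∀ i j, i ≠ j → Disjoint (τ i) (τ j))
    (hcover : Finset.univ.biUnion τ = Finset.univ)
    (hnoedges : ∀ i j : Fin N, i ≠ j → ∀ u ∈ τ i, ∀ v ∈ τ j, ¬ G u v)
    (σ : Finset (Fin n)) (hσ : σ.Nonempty) :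
    (memFP W b Finset.univ σ ↔
      ∀ i : Fin N, σ ∩ τ i = ∅ ∨ memFP W b (τ i) (σ ∩ τ i)) ∧
    (memFP W b Finset.univ σ →
      Real.sign (detIW W σ) =
        (-1 : ℝ) ^ ((Finset.univ.filter (fun i : Fin N => (σ ∩ τ i).Nonempty)).card - 1) *
          ∏ i ∈ Finset.univ.filter (fun i : Fin N => (σ ∩ τ i).Nonempty),
            Real.sign (detIW W (σ ∩ τ i))) := by
  subst hWdef hbdef
  have hε1 : ε < 1 := hεδ.trans ((div_lt_one (by linarith)).2 (by linarith))
  have hU : IsDisjointUnion (ctlnW G ε δ) (1 + δ) τ :=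
    isDisjointUnion_ctlnW (fun u => by simpa using hcover.ge (mem_univ u))
      (fun i j => hdisj i j) hnoedges
  have hW := ctlnW_nonpos (G := G) hε1 hδ.le
  have hlow := neg_one_sub_le_ctlnW (G := G) hε.le hδ.le
  have hc : 1 < 1 + δ := by linarith
  refine ⟨⟨fun h k => ?_, hU.memFP_univ ctlnW_self hlow hc hθ hσ⟩,
    fun h => hU.sign_detIW hW ctlnW_self hlow hc hθ h hσ⟩
  rcases (σ ∩ τ k).eq_empty_or_nonempty with hk | hk
  · exact Or.inl hk
  · exact Or.inr (hU.memFP_block hW hθ h hk)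

/-- **Disjoint unions.** Let `G` be a simple directed graph on `[n]` with CTLN parameters
in the legal range, which is the disjoint union of components `G_1, …, G_N` on vertex sets
`τ_1, …, τ_N` (no edges between distinct components). Then for nonempty `σ ⊆ [n]`, with
`σ_i := σ ∩ τ_i`: `σ ∈ FP(G)` iff for each `i`, either `σ_i = ∅` or `σ_i ∈ FP(G_i)`.
Moreover, for `σ ∈ FP(G)`, with `σ̂ := {i : σ_i ≠ ∅}`,
`sgn det(I − W_σ) = (−1)^{|σ̂|−1} ∏_{i ∈ σ̂} sgn det(I − W_{σ_i})`. -/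
theorem disjoint_union_rule {n N : ℕ} (G : Fin n → Fin n → Prop) [DecidableRel G]
    (hGirr : ∀ i, ¬ G i i) (ε δ θ : ℝ)
    (hθ : 0 < θ) (hδ : 0 < δ) (hε : 0 < ε) (hεδ : ε < δ / (δ + 1))
    (W : Matrix (Fin n) (Fin n) ℝ) (hWdef : W = ctlnW G ε δ)
    (b : Fin n → ℝ) (hbdef : b = fun _ => θ)
    (τ : Fin N → Finset (Fin n)) (hne : ∀ i, (τ i).Nonempty)
    (hdisj : ∀ i j, i ≠ j → Disjoint (τ i) (τ j))
    (hcover : Finset.univ.biUnion τ = Finset.univ)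
    (hnoedges : ∀ i j : Fin N, i ≠ j → ∀ u ∈ τ i, ∀ v ∈ τ j, ¬ G u v)
    (σ : Finset (Fin n)) (hσ : σ.Nonempty) :
    (memFP W b Finset.univ σ ↔
      ∀ i : Fin N, σ ∩ τ i = ∅ ∨ memFP W b (τ i) (σ ∩ τ i)) ∧
    (memFP W b Finset.univ σ →
      Real.sign (detIW W σ) =
        (-1 : ℝ) ^ ((Finset.univ.filter (fun i : Fin N => (σ ∩ τ i).Nonempty)).card - 1) *
          ∏ i ∈ Finset.univ.filter (fun i : Fin N => (σ ∩ τ i).Nonempty),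
            Real.sign (detIW W (σ ∩ τ i))) :=
  disjoint_union_rule_general G ε δ θ hθ hδ hε hεδ W hWdef b hbdef τ hdisj hcover hnoedges σ hσ
end
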